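/- arXiv:cs/0507048 — 6 statements merged into one kernel-verified Lean document; each statement's English description precedes it below -/
import Mathlib

section
/- A CNF formula Π is CIRC-redundant if and only if it contains a CIRC-redundant clause. That is, circumscription has the local redundancy property: Π is equivalent under circumscription to some proper subset of itself if and only if there exists a clause γ ∈ Π with CIRC(Π \ {γ}) = CIRC(Π). -/
/-- A propositional clause: sets of positively and negatively occurring variables. -/
structure Clause (V : Type) where
  pos : Set V
  neg : Set V

/-- A model (set of variables assigned true) satisfies a clause. -/
def Clause.sat {V : Type} (M : Set V) (c : Clause V) : Prop :=
  (∃ x ∈ c.pos, x ∈ M) ∨ (∃ x ∈ c.neg, x ∉ M)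

/-- Models of a CNF formula (set of clauses). -/
def ModOf {V : Type} (F : Set (Clause V)) : Set (Set V) :=
  {M | ∀ c ∈ F, c.sat M}

/-- Minimal models of a formula, w.r.t. set inclusion. -/
def CIRC {V : Type} (F : Set (Clause V)) : Set (Set V) :=
  {M | M ∈ ModOf F ∧ ¬ ∃ M' ∈ ModOf F, M' ⊂ M}

/-!
Removing clauses only enlarges the set of models, and in a finite powerset every model lies
above a minimal one. So if `F' ⊆ G ⊆ F` and `F'` and `F` have the same minimal models, then
each minimal model of `G` lies above a minimal model of `F'`, which is a model of `F` and hence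
of `G`; the two coincide, and `G` has the same minimal models as well. Taking `G = F \ {γ}` for
any `γ ∈ F \ F'` gives a single redundant clause.
-/

theorem setOf_minimal_eq_of_subset_of_subset {α : Type*} [PartialOrder α] [WellFoundedLT α]
    {s t u : Set α} (hst : s ⊆ t) (htu : t ⊆ u)
    (h : {x | Minimal (· ∈ u) x} = {x | Minimal (· ∈ s) x}) :
    {x | Minimal (· ∈ t) x} = {x | Minimal (· ∈ s) x} := by
  ext x
  constructor
  · intro hx
    obtain ⟨y, hyx, hy⟩ := exists_minimal_le_of_wellFoundedLT (· ∈ u) x (htu hx.prop)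
    have hys : Minimal (· ∈ s) y := h.subset hy
    obtain rfl : y = x := hx.eq_of_le (hst hys.prop) hyx
    exact hys
  · intro hx
    have hxu : Minimal (· ∈ u) x := h.symm.subset hx
    exact hxu.mono htu (hst hx.prop)

theorem modOf_antitone {V : Type} : Antitone (ModOf (V := V)) :=
  fun _ _ hFG _ hM c hc => hM c (hFG hc)

theorem circ_eq_setOf_minimal {V : Type} (F : Set (Clause V)) :
    CIRC F = {M | Minimal (· ∈ ModOf F) M} := by
  ext M
  simp only [CIRC, Set.mem_ofPred_eq, minimal_iff_forall_lt, not_exists, not_and]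
  exact and_congr_right fun _ => ⟨fun h N hNM hN => h N hN hNM, fun h N hN hNM => h hNM hN⟩

theorem circ_eq_of_subset_of_subset {V : Type} [Finite V] {F' G F : Set (Clause V)}
    (hF'G : F' ⊆ G) (hGF : G ⊆ F) (h : CIRC F' = CIRC F) : CIRC G = CIRC F := by
  simp only [circ_eq_setOf_minimal] at h ⊢
  exact setOf_minimal_eq_of_subset_of_subset (modOf_antitone hGF) (modOf_antitone hF'G) h

theorem circ_local_redundancy_general {V : Type} [Fintype V]
    (F : Set (Clause V)) :
    (∃ F' ⊂ F, CIRC F' = CIRC F) ↔ (∃ γ ∈ F, CIRC (F \ {γ}) = CIRC F) := by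
  constructor
  · rintro ⟨F', hF'F, h⟩
    obtain ⟨γ, hγF, hγF'⟩ := Set.exists_of_ssubset hF'F
    exact ⟨γ, hγF, circ_eq_of_subset_of_subset
      (Set.subset_sdiff_singleton hF'F.subset hγF') Set.sdiff_subset h⟩
  · rintro ⟨γ, hγF, h⟩
    exact ⟨F \ {γ}, Set.sdiff_singleton_ssubset.mpr hγF, h⟩

/-- Circumscription has the local redundancy property. -/
theorem circ_local_redundancy {V : Type} [Fintype V]
    (F : Set (Clause V)) (hfin : F.Finite) :
    (∃ F' ⊂ F, CIRC F' = CIRC F) ↔ (∃ γ ∈ F, CIRC (F \ {γ}) = CIRC F) :=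
  circ_local_redundancy_general F
end

section
/- A clause γ ∈ Π is CIRC-redundant in Π if and only if for every model M of (Π \ {γ}) ∪ ¬γ there exists a model M' of Π with M' ⊊ M. -/
/-- The formula ¬γ: the set of unit clauses negating each literal of γ. -/
def negOf {V : Type} (γ : Clause V) : Set (Clause V) :=
  (fun x => (⟨∅, {x}⟩ : Clause V)) '' γ.pos ∪ (fun x => (⟨{x}, ∅⟩ : Clause V)) '' γ.neg

/-!
Write `G = F \ {γ}`. Every model of `F` is a model of `G`, and a model of `G` is a model of `F`
exactly when it satisfies `γ`, i.e. fails `¬γ`. Among sets of variables of a finite type every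
model lies above a minimal one, so for `ModOf F ⊆ ModOf G` the minimal elements agree precisely
when each model of `G` outside `ModOf F` lies strictly above some model of `F`.
-/

theorem setOf_minimal_eq_iff {α : Type*} [PartialOrder α] [WellFoundedLT α] {S T : Set α}
    (hST : S ⊆ T) :
    {x | Minimal (· ∈ T) x} = {x | Minimal (· ∈ S) x} ↔
      ∀ x ∈ T \ S, ∃ y ∈ S, y < x := by
  constructor
  · rintro h x ⟨hxT, hxS⟩
    obtain ⟨y, hyx, hy⟩ := exists_minimal_le_of_wellFoundedLT (· ∈ T) x hxT
    have hyS : y ∈ S := (h.subset hy : Minimal (· ∈ S) y).prop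
    exact ⟨y, hyS, hyx.lt_of_ne (by rintro rfl; exact hxS hyS)⟩
  · intro h
    have hTS : ∀ x, Minimal (· ∈ T) x → Minimal (· ∈ S) x := by
      intro x hx
      have hxS : x ∈ S := by
        by_contra hxS
        obtain ⟨y, hyS, hyx⟩ := h x ⟨hx.prop, hxS⟩
        exact hx.not_prop_of_lt hyx (hST hyS)
      exact hx.mono hST hxS
    ext x
    refine ⟨hTS x, fun hx => minimal_iff_forall_lt.2 ⟨hST hx.prop, fun y hyx hyT => ?_⟩⟩
    obtain ⟨z, hzy, hz⟩ := exists_minimal_le_of_wellFoundedLT (· ∈ T) y hyT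
    exact hx.not_prop_of_lt (hzy.trans_lt hyx) (hTS z hz).prop

section

variable {V : Type}

theorem CIRC_eq_setOf_minimal (F : Set (Clause V)) :
    CIRC F = {M | Minimal (· ∈ ModOf F) M} := by
  ext M
  refine (and_congr_right fun _ => ?_).trans minimal_iff_forall_lt.symm
  exact ⟨fun h y hyM hy => h ⟨y, hy, hyM⟩, fun h ⟨y, hy, hyM⟩ => h hyM hy⟩

theorem ModOf_antitone : Antitone (ModOf (V := V)) :=
  fun _ _ hFG _ hM c hc => hM c (hFG hc)

theorem ModOf_union (F G : Set (Clause V)) : ModOf (F ∪ G) = ModOf F ∩ ModOf G := by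
  ext M
  simp only [ModOf, Set.mem_union, or_imp, forall_and, Set.mem_ofPred_eq, Set.mem_inter_iff]

theorem mem_ModOf_negOf {γ : Clause V} {M : Set V} : M ∈ ModOf (negOf γ) ↔ ¬ γ.sat M := by
  simp [ModOf, negOf, Clause.sat, or_imp, forall_and]

theorem mem_ModOf_of_mem_ModOf_diff_singleton {F : Set (Clause V)} {γ : Clause V} {M : Set V}
    (hM : M ∈ ModOf (F \ {γ})) (hγM : γ.sat M) : M ∈ ModOf F := by
  intro c hc
  by_cases hcγ : c = γ
  · exact hcγ ▸ hγM
  · exact hM c ⟨hc, hcγ⟩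

theorem ModOf_diff_singleton_union_negOf {F : Set (Clause V)} {γ : Clause V} (hγ : γ ∈ F) :
    ModOf ((F \ {γ}) ∪ negOf γ) = ModOf (F \ {γ}) \ ModOf F := by
  ext M
  rw [ModOf_union, Set.mem_inter_iff, Set.mem_sdiff, mem_ModOf_negOf]
  refine and_congr_right fun hM => ⟨fun hγM hMF => hγM (hMF γ hγ), fun hMF hγM => ?_⟩
  exact hMF (mem_ModOf_of_mem_ModOf_diff_singleton hM hγM)

end

theorem circ_redundant_iff_contains_model_general {V : Type} [Fintype V]
    (F : Set (Clause V)) (γ : Clause V) (hγ : γ ∈ F) :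
    CIRC (F \ {γ}) = CIRC F ↔
      ∀ M ∈ ModOf ((F \ {γ}) ∪ negOf γ), ∃ M' ∈ ModOf F, M' ⊂ M := by
  rw [CIRC_eq_setOf_minimal, CIRC_eq_setOf_minimal,
    setOf_minimal_eq_iff (ModOf_antitone Set.sdiff_subset), ModOf_diff_singleton_union_negOf hγ]

theorem circ_redundant_iff_contains_model {V : Type} [Fintype V]
    (F : Set (Clause V)) (hfin : F.Finite) (γ : Clause V) (hγ : γ ∈ F) :
    CIRC (F \ {γ}) = CIRC F ↔
      ∀ M ∈ ModOf ((F \ {γ}) ∪ negOf γ), ∃ M' ∈ ModOf F, M' ⊂ M :=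
  circ_redundant_iff_contains_model_general F γ hγ
end

section
/- A positive clause γ (containing only positive literals) is CIRC-redundant in a CNF formula Π if and only if it is classically redundant in Π, i.e., Π \ {γ} ⊨ γ. -/
section

variable {V : Type}

lemma Clause.sat_of_subset_of_neg_eq_empty {c : Clause V} (hneg : c.neg = ∅) {M N : Set V}
    (hMN : M ⊆ N) (hM : c.sat M) : c.sat N := by
  rcases hM with ⟨x, hx, hxM⟩ | ⟨x, hx, -⟩
  · exact Or.inl ⟨x, hx, hMN hxM⟩
  · simp [hneg] at hx

lemma CIRC_eq_of_ModOf_eq {F G : Set (Clause V)} (h : ModOf F = ModOf G) : CIRC F = CIRC G := by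
  simp only [CIRC, h]

lemma ModOf_diff_singleton_eq {F : Set (Clause V)} {γ : Clause V}
    (h : ∀ M ∈ ModOf (F \ {γ}), γ.sat M) : ModOf (F \ {γ}) = ModOf F := by
  refine Set.Subset.antisymm (fun M hM c hc => ?_) (fun M hM c hc => hM c hc.1)
  by_cases hcγ : c = γ
  · exact hcγ ▸ h M hM
  · exact hM c ⟨hc, hcγ⟩

lemma exists_mem_CIRC_subset [Finite V] (F : Set (Clause V)) {M : Set V} (hM : M ∈ ModOf F) :
    ∃ N ∈ CIRC F, N ⊆ M := by
  obtain ⟨N, ⟨hNF, hNM⟩, hmin⟩ :=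
    (wellFounded_lt (α := Set V)).has_min {N | N ∈ ModOf F ∧ N ⊆ M} ⟨M, hM, subset_rfl⟩
  exact ⟨N, ⟨hNF, fun ⟨N', hN'F, hlt⟩ => hmin N' ⟨hN'F, hlt.subset.trans hNM⟩ hlt⟩, hNM⟩

end

theorem positive_circ_redundant_iff_redundant_general {V : Type} [Fintype V]
    (F : Set (Clause V)) (γ : Clause V) (hγ : γ ∈ F)
    (hpos : γ.neg = ∅) :
    CIRC (F \ {γ}) = CIRC F ↔ ∀ M ∈ ModOf (F \ {γ}), γ.sat M := by
  refine ⟨fun hcirc M hM => ?_, fun h => CIRC_eq_of_ModOf_eq (ModOf_diff_singleton_eq h)⟩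
  obtain ⟨N, hN, hNM⟩ := exists_mem_CIRC_subset (F \ {γ}) hM
  rw [hcirc] at hN
  exact γ.sat_of_subset_of_neg_eq_empty hpos hNM (hN.1 γ hγ)

/-- For a positive clause, CIRC-redundancy coincides with classical redundancy. -/
theorem positive_circ_redundant_iff_redundant {V : Type} [Fintype V]
    (F : Set (Clause V)) (hfin : F.Finite) (γ : Clause V) (hγ : γ ∈ F)
    (hpos : γ.neg = ∅) :
    CIRC (F \ {γ}) = CIRC F ↔ ∀ M ∈ ModOf (F \ {γ}), γ.sat M :=
  positive_circ_redundant_iff_redundant_general F γ hγ hpos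
end

section
/- In classical propositional logic, a CNF formula is equivalent to one of its proper subsets if and only if it contains a clause γ with Π \ {γ} ⊨ γ (local redundancy property of classical logic). -/
section

variable {V : Type}

theorem ModOf_anti {F G : Set (Clause V)} (h : F ⊆ G) : ModOf G ⊆ ModOf F :=
  fun _ hM c hc => hM c (h hc)

theorem ModOf_insert (γ : Clause V) (F : Set (Clause V)) :
    ModOf (insert γ F) = ModOf F ∩ {M | γ.sat M} := by
  ext M
  simp [ModOf, and_comm]

theorem ModOf_diff_singleton_eq_iff {F : Set (Clause V)} {γ : Clause V} (hγ : γ ∈ F) :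
    ModOf (F \ {γ}) = ModOf F ↔ ∀ M ∈ ModOf (F \ {γ}), γ.sat M := by
  have hModF : ModOf F = ModOf (F \ {γ}) ∩ {M | γ.sat M} := by
    rw [← ModOf_insert, Set.insert_sdiff_singleton, Set.insert_eq_of_mem hγ]
  rw [hModF]
  exact Set.left_eq_inter

end

theorem classical_local_redundancy_general {V : Type}
    (F : Set (Clause V)) :
    (∃ F' ⊂ F, ModOf F' = ModOf F) ↔ (∃ γ ∈ F, ∀ M ∈ ModOf (F \ {γ}), γ.sat M) := by
  constructor
  · rintro ⟨F', hF'F, hmod⟩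
    obtain ⟨γ, hγF, hγF'⟩ := Set.exists_of_ssubset hF'F
    have hF'_sub : F' ⊆ F \ {γ} := Set.subset_sdiff_singleton hF'F.subset hγF'
    refine ⟨γ, hγF, fun M hM => ?_⟩
    exact (hmod ▸ ModOf_anti hF'_sub hM) γ hγF
  · rintro ⟨γ, hγF, hent⟩
    exact ⟨F \ {γ}, Set.sdiff_singleton_ssubset.2 hγF, (ModOf_diff_singleton_eq_iff hγF).2 hent⟩

/-- Classical propositional logic has the local redundancy property. -/
theorem classical_local_redundancy {V : Type}
    (F : Set (Clause V)) (hfin : F.Finite) :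
    (∃ F' ⊂ F, ModOf F' = ModOf F) ↔ (∃ γ ∈ F, ∀ M ∈ ModOf (F \ {γ}), γ.sat M) :=
  classical_local_redundancy_general F
end

section
/- For W' ⊆ W, the three conditions W' ⊨_D W (every extension of ⟨D,W'⟩ entails W), W' ⊨^c_D W (∨Ext_D(W') ⊨ ∨Ext_D(W)), and W' ⊨^e_D W (Ext_D(W') ⊆ Ext_D(W)) are all equivalent. -/
/-- A default rule, represented semantically: precondition, justification and
consequence are given by their sets of models. -/
structure Default (V : Type) where
  prec : Set (Set V)
  just : Set (Set V)
  cons : Set (Set V)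

/-- Models of the conjunction of the consequences of a sequence of defaults. -/
def consSet {V : Type} (p : List (Default V)) : Set (Set V) :=
  {M | ∀ d ∈ p, M ∈ d.cons}

/-- Models of the conjunction of the justifications of a sequence of defaults. -/
def justSet {V : Type} (p : List (Default V)) : Set (Set V) :=
  {M | ∀ d ∈ p, M ∈ d.just}

/-- A process of ⟨D,W⟩: a duplicate-free sequence of defaults of D such that the
precondition of each default is entailed by W together with the consequences of
the preceding defaults. -/
def IsProcess {V : Type} (D : Set (Default V)) (W : Set (Clause V))
    (p : List (Default V)) : Prop :=
  p.Nodup ∧ (∀ d ∈ p, d ∈ D) ∧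
  ∀ (i : ℕ) (h : i < p.length),
    ModOf W ∩ consSet (p.take i) ⊆ (p.get ⟨i, h⟩).prec

/-- Success: W ∪ cons(p) is consistent with the justification of each default of p. -/
def Successful {V : Type} (W : Set (Clause V)) (p : List (Default V)) : Prop :=
  ∀ d ∈ p, (ModOf W ∩ consSet p ∩ d.just).Nonempty

/-- Local applicability of a default in a process. -/
def LocallyApplicable {V : Type} (W : Set (Clause V)) (p : List (Default V))
    (d : Default V) : Prop :=
  ModOf W ∩ consSet p ⊆ d.prec ∧ (ModOf W ∩ consSet p ∩ d.just).Nonempty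

/-- Reiter semantics: selected processes. -/
def ReiterSelected {V : Type} (D : Set (Default V)) (W : Set (Clause V))
    (p : List (Default V)) : Prop :=
  IsProcess D W p ∧ Successful W p ∧
  ∀ d ∈ D, d ∉ p → ¬ LocallyApplicable W p d

/-- Extensions (as sets of models, i.e. up to logical equivalence) in Reiter semantics. -/
def ReiterExtensions {V : Type} (D : Set (Default V)) (W : Set (Clause V)) :
    Set (Set (Set V)) :=
  {E | ∃ p, ReiterSelected D W p ∧ E = ModOf W ∩ consSet p}

/-!
If every extension of ⟨D,W'⟩ entails W, then for a selected process Π of ⟨D,W'⟩ the extension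
W' ∪ cons(Π) is equivalent to W ∪ cons(Π). Success and maximality of Π only see W through
W ∪ cons(Π), and the process condition only gets easier when W' grows to W, so Π is also
selected for ⟨D,W⟩ with the same extension. Conversely, every extension of ⟨D,W⟩ entails W.
-/

lemma modOf_anti {V : Type} {W' W : Set (Clause V)} (h : W' ⊆ W) : ModOf W ⊆ ModOf W' :=
  fun _ hM c hc => hM c (h hc)

lemma IsProcess.of_modOf_subset {V : Type} {D : Set (Default V)} {W' W : Set (Clause V)}
    {p : List (Default V)} (hp : IsProcess D W' p) (hW : ModOf W ⊆ ModOf W') :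
    IsProcess D W p :=
  ⟨hp.1, hp.2.1, fun i hi => (Set.inter_subset_inter_left _ hW).trans (hp.2.2 i hi)⟩

lemma ReiterSelected.of_inter_consSet_eq {V : Type} {D : Set (Default V)}
    {W' W : Set (Clause V)} {p : List (Default V)} (hp : ReiterSelected D W' p)
    (hW : ModOf W ⊆ ModOf W') (heq : ModOf W ∩ consSet p = ModOf W' ∩ consSet p) :
    ReiterSelected D W p := by
  obtain ⟨hproc, hsucc, hmax⟩ := hp
  refine ⟨hproc.of_modOf_subset hW, fun d hd => heq ▸ hsucc d hd, ?_⟩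
  rintro d hD hnp ⟨happ, hcons⟩
  exact hmax d hD hnp ⟨heq ▸ happ, heq ▸ hcons⟩

lemma sUnion_reiterExtensions_subset_modOf {V : Type} (D : Set (Default V))
    (W : Set (Clause V)) : ⋃₀ ReiterExtensions D W ⊆ ModOf W := by
  rintro M ⟨_, ⟨p, -, rfl⟩, hM⟩
  exact hM.1

lemma reiterExtensions_subset_of_sUnion_subset_modOf {V : Type} {D : Set (Default V)}
    {W' W : Set (Clause V)} (hsub : W' ⊆ W) (h : ⋃₀ ReiterExtensions D W' ⊆ ModOf W) :
    ReiterExtensions D W' ⊆ ReiterExtensions D W := by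
  rintro _ ⟨p, hp, rfl⟩
  have heq : ModOf W ∩ consSet p = ModOf W' ∩ consSet p :=
    (Set.inter_subset_inter_left _ (modOf_anti hsub)).antisymm
      fun M hM => ⟨h ⟨_, ⟨p, hp, rfl⟩, hM⟩, hM.2⟩
  exact ⟨p, hp.of_inter_consSet_eq (modOf_anti hsub) heq, heq.symm⟩

/-- For W' ⊆ W, plain entailment, consequence-entailment and faithful
entailment all coincide. -/
theorem entailments_coincide {V : Type}
    (D : Set (Default V)) (W' W : Set (Clause V)) (hsub : W' ⊆ W) :
    ((⋃₀ ReiterExtensions D W' ⊆ ModOf W) ↔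
      (⋃₀ ReiterExtensions D W' ⊆ ⋃₀ ReiterExtensions D W)) ∧
    ((⋃₀ ReiterExtensions D W' ⊆ ModOf W) ↔
      ReiterExtensions D W' ⊆ ReiterExtensions D W) := by
  have hext : (⋃₀ ReiterExtensions D W' ⊆ ModOf W) ↔
      ReiterExtensions D W' ⊆ ReiterExtensions D W :=
    ⟨reiterExtensions_subset_of_sUnion_subset_modOf hsub,
      fun h => (Set.sUnion_mono h).trans (sUnion_reiterExtensions_subset_modOf D W)⟩
  exact ⟨⟨fun h => Set.sUnion_mono (hext.mp h),
      fun h => h.trans (sUnion_reiterExtensions_subset_modOf D W)⟩, hext⟩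
end

section
/- There exist a set of defaults D and background theories W' ⊂ W such that W and W' mutually entail each other under default entailment (W' ⊨_D W and W ⊨_D W') but they are not consequence-equivalent (∨Ext_D(W') ≢ ∨Ext_D(W)). Concretely: D = {(:a∧¬b)/(a∧¬b), (a:b)/b}, W = {a}, W' = ∅; then ∨Ext_D(W') ≡ a∧¬b while ∨Ext_D(W) ≡ a. -/
/-- The default (:a∧¬b)/(a∧¬b); variables a = 0, b = 1 : Fin 2. -/
def d1 : Default (Fin 2) :=
  ⟨Set.univ, {M | 0 ∈ M ∧ 1 ∉ M}, {M | 0 ∈ M ∧ 1 ∉ M}⟩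
/-- The default (a:b)/b. -/
def d2 : Default (Fin 2) :=
  ⟨{M | 0 ∈ M}, {M | 1 ∈ M}, {M | 1 ∈ M}⟩
/-- The background theory W = {a}. -/
def Wa : Set (Clause (Fin 2)) := {⟨{0}, ∅⟩}

/-! Over `W' = ∅` the default `(a:b)/b` cannot come first, since `a` is not yet known, and after
`(:a∧¬b)/(a∧¬b)` its justification is refuted; so the only extension is `a ∧ ¬b`. Over `W = {a}`
both defaults are applicable, and as each one's consequence refutes the other's justification,
each starts its own extension: `a ∧ ¬b` and `a ∧ b`, whose disjunction is `a`. -/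

theorem ModOf_empty {V : Type} : ModOf (∅ : Set (Clause V)) = Set.univ := by
  simp [ModOf]

theorem ModOf_Wa : ModOf Wa = {M | 0 ∈ M} := by
  ext M
  simp [ModOf, Wa, Clause.sat]

@[simp]
theorem consSet_nil {V : Type} : consSet ([] : List (Default V)) = Set.univ := by
  simp [consSet]

@[simp]
theorem consSet_singleton {V : Type} (d : Default V) : consSet [d] = d.cons := by
  simp [consSet]

theorem List.Nodup.eq_nil_or_eq_singleton {α : Type*} {l : List α} {a : α} (hl : l.Nodup)
    (h : ∀ b ∈ l, b = a) : l = [] ∨ l = [a] := by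
  rw [List.eq_replicate_iff.2 ⟨rfl, h⟩] at hl ⊢
  rcases l with _ | ⟨_, _ | _⟩
  · exact .inl rfl
  · exact .inr rfl
  · simp [List.nodup_replicate] at hl

section Reiter

variable {V : Type} {D : Set (Default V)} {W : Set (Clause V)} {p : List (Default V)}
  {d e : Default V}

theorem IsProcess.modOf_subset_prec_head (hp : IsProcess D W (d :: p)) : ModOf W ⊆ d.prec := by
  simpa using hp.2.2 0 (by simp)

theorem Successful.not_disjoint (hs : Successful W p) (hd : d ∈ p) (he : e ∈ p) :
    ¬ Disjoint d.cons e.just := fun h ↦ by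
  obtain ⟨M, ⟨-, hM⟩, hMe⟩ := hs e he
  exact Set.disjoint_left.1 h (hM d hd) hMe

theorem not_locallyApplicable_singleton (h : Disjoint d.cons e.just) :
    ¬ LocallyApplicable W [d] e := by
  rintro ⟨-, M, ⟨-, hM⟩, hMe⟩
  exact Set.disjoint_left.1 h (by simpa using hM) hMe

theorem ReiterSelected.ne_nil (hs : ReiterSelected D W p) (hd : d ∈ D)
    (hprec : ModOf W ⊆ d.prec) (hjust : (ModOf W ∩ d.just).Nonempty) : p ≠ [] := by
  rintro rfl
  exact hs.2.2 d hd List.not_mem_nil ⟨by simpa using hprec, by simpa using hjust⟩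

theorem reiterSelected_singleton (hd : d ∈ D) (hprec : ModOf W ⊆ d.prec)
    (hsucc : (ModOf W ∩ d.cons ∩ d.just).Nonempty)
    (hmax : ∀ e ∈ D, e ≠ d → ¬ LocallyApplicable W [d] e) : ReiterSelected D W [d] := by
  refine ⟨⟨List.nodup_singleton d, by simpa using hd, ?_⟩, by simpa [Successful] using hsucc, ?_⟩
  · intro i hi
    obtain rfl : i = 0 := by simpa using hi
    simpa using hprec
  · intro e he hne
    exact hmax e he (by simpa using hne)

end Reiter

theorem d1_ne_d2 : d1 ≠ d2 := fun h ↦ by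
  simpa [d1, d2] using congrArg (∅ ∈ Default.prec ·) h

theorem disjoint_d1_cons_d2_just : Disjoint d1.cons d2.just :=
  Set.disjoint_left.2 fun _ hM ↦ hM.2

theorem disjoint_d2_cons_d1_just : Disjoint d2.cons d1.just :=
  Set.disjoint_left.2 fun _ hM hM' ↦ hM'.2 hM

theorem reiterSelected_d1 {W : Set (Clause (Fin 2))} (hW : {0} ∈ ModOf W) :
    ReiterSelected {d1, d2} W [d1] := by
  refine reiterSelected_singleton (by simp) (fun _ _ ↦ trivial) ⟨{0}, ⟨hW, ?_⟩, ?_⟩ ?_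
  · simp [d1]
  · simp [d1]
  · rintro e (rfl | rfl) hne
    · exact absurd rfl hne
    · exact not_locallyApplicable_singleton disjoint_d1_cons_d2_just

theorem reiterSelected_d2_Wa : ReiterSelected {d1, d2} Wa [d2] := by
  refine reiterSelected_singleton (by simp) (by rw [ModOf_Wa]; exact fun _ ↦ id)
    ⟨{0, 1}, ⟨by simp [ModOf_Wa], by simp [d2]⟩, by simp [d2]⟩ ?_
  rintro e (rfl | rfl) hne
  · exact not_locallyApplicable_singleton disjoint_d2_cons_d1_just
  · exact absurd rfl hne

theorem not_reiterSelected_d2_empty : ¬ ReiterSelected {d1, d2} ∅ [d2] := fun hs ↦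
  Set.notMem_empty (0 : Fin 2) (hs.1.modOf_subset_prec_head (ModOf_empty ▸ Set.mem_univ ∅))

theorem eq_of_reiterSelected {W : Set (Clause (Fin 2))} {p : List (Default (Fin 2))}
    (hW : {0} ∈ ModOf W) (hs : ReiterSelected {d1, d2} W p) : p = [d1] ∨ p = [d2] := by
  have hne := hs.ne_nil (d := d1) (by simp) (fun _ _ ↦ trivial) ⟨{0}, hW, by simp [d1]⟩
  have hmem : ∀ d ∈ p, d = d1 ∨ d = d2 := hs.1.2.1
  by_cases h1 : d1 ∈ p
  · have h2 : d2 ∉ p := fun h2 ↦ hs.2.1.not_disjoint h1 h2 disjoint_d1_cons_d2_just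
    refine .inl ((hs.1.1.eq_nil_or_eq_singleton fun d hd ↦ ?_).resolve_left hne)
    exact (hmem d hd).resolve_right (by rintro rfl; exact h2 hd)
  · refine .inr ((hs.1.1.eq_nil_or_eq_singleton fun d hd ↦ ?_).resolve_left hne)
    exact (hmem d hd).resolve_left (by rintro rfl; exact h1 hd)

theorem reiterExtensions_empty :
    ReiterExtensions {d1, d2} (∅ : Set (Clause (Fin 2))) = {d1.cons} := by
  have hW : {0} ∈ ModOf (∅ : Set (Clause (Fin 2))) := ModOf_empty ▸ Set.mem_univ _
  ext E
  constructor
  · rintro ⟨p, hs, rfl⟩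
    obtain rfl | rfl := eq_of_reiterSelected hW hs
    · simp [ModOf_empty]
    · exact absurd hs not_reiterSelected_d2_empty
  · rintro rfl
    exact ⟨[d1], reiterSelected_d1 hW, by simp [ModOf_empty]⟩

theorem reiterExtensions_Wa :
    ReiterExtensions {d1, d2} Wa = {ModOf Wa ∩ d1.cons, ModOf Wa ∩ d2.cons} := by
  have hW : {0} ∈ ModOf Wa := by simp [ModOf_Wa]
  ext E
  constructor
  · rintro ⟨p, hs, rfl⟩
    obtain rfl | rfl := eq_of_reiterSelected hW hs <;> simp
  · rintro (rfl | rfl)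
    · exact ⟨[d1], reiterSelected_d1 hW, by simp⟩
    · exact ⟨[d2], reiterSelected_d2_Wa, by simp⟩

theorem sUnion_reiterExtensions_empty :
    ⋃₀ ReiterExtensions {d1, d2} (∅ : Set (Clause (Fin 2))) = {M | 0 ∈ M ∧ 1 ∉ M} := by
  rw [reiterExtensions_empty, Set.sUnion_singleton]
  rfl

theorem sUnion_reiterExtensions_Wa : ⋃₀ ReiterExtensions {d1, d2} Wa = {M | 0 ∈ M} := by
  rw [reiterExtensions_Wa, Set.sUnion_pair, ← Set.inter_union_distrib_left, ModOf_Wa]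
  ext M
  simp only [d1, d2, Set.mem_inter_iff, Set.mem_union, Set.mem_ofPred_eq]
  tauto

/-- Mutual entailment without consequence-equivalence:
with W' = ∅ ⊂ W = {a}, every extension of ⟨D,W'⟩ entails W and vice versa,
∨Ext_D(W') ≡ a∧¬b, ∨Ext_D(W) ≡ a, and the two are not equivalent. -/
theorem mutual_not_consequence :
    (∅ : Set (Clause (Fin 2))) ⊂ Wa ∧
    (⋃₀ ReiterExtensions {d1, d2} (∅ : Set (Clause (Fin 2))) ⊆ ModOf Wa) ∧
    (⋃₀ ReiterExtensions {d1, d2} Wa ⊆ ModOf (∅ : Set (Clause (Fin 2)))) ∧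
    ⋃₀ ReiterExtensions {d1, d2} (∅ : Set (Clause (Fin 2)))
      = {M : Set (Fin 2) | 0 ∈ M ∧ 1 ∉ M} ∧
    ⋃₀ ReiterExtensions {d1, d2} Wa = {M : Set (Fin 2) | 0 ∈ M} ∧
    ⋃₀ ReiterExtensions {d1, d2} (∅ : Set (Clause (Fin 2)))
      ≠ ⋃₀ ReiterExtensions {d1, d2} Wa := by
  rw [sUnion_reiterExtensions_empty, sUnion_reiterExtensions_Wa, ModOf_Wa, ModOf_empty]
  refine ⟨Set.empty_ssubset.2 ⟨_, rfl⟩, fun _ hM ↦ hM.1, Set.subset_univ _, rfl, rfl, ?_⟩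
  intro h
  have hab : ({0, 1} : Set (Fin 2)) ∈ {M : Set (Fin 2) | 0 ∈ M} := by simp
  exact (h ▸ hab).2 (by simp)
end
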